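/- Let M be a von Neumann algebra acting on a complex Hilbert space H and let P, Q : M → M be normal, unital, completely positive linear maps. If Y ∈ B(H) satisfies the P-boundedness condition with constant C_Y and Z ∈ B(H) satisfies the Q-boundedness condition with constant C_Z, then the product YZ satisfies the (P∘Q)-boundedness condition with constant C_Y·C_Z; that is, for all S_1,…,S_n ∈ M and h_1,…,h_n ∈ H, ‖∑_i S_i (YZ)* h_i‖² ≤ C_Y C_Z ∑_{i,j} ⟨h_i, P(Q(S_i* S_j)) h_j⟩. In particular E_P · E_Q ⊆ E_{P∘Q}. -/

import Mathlib

/-!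
The `Q`-bound of `Z`, applied to the vectors `Y* hᵢ`, reduces the claim to the estimate
`∑ᵢⱼ ⟨Y* hᵢ, aᵢⱼ Y* hⱼ⟩ ≤ C_Y ∑ᵢⱼ ⟨hᵢ, P(aᵢⱼ) hⱼ⟩` for the matrix `aᵢⱼ = Q(Sᵢ* Sⱼ)`, which is
positive by complete positivity of `Q`. Factor `a = b* b` with `b = √a` on `Hⁿ`: since `√a`
commutes with every `diag(T, …, T)`, `T ∈ M'`, the entries of `b` lie in `M'' = M`, and the
estimate is the `P`-bound of `Y` applied to each row of `b`, summed over the rows.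
-/

open scoped ComplexOrder
open ContinuousLinearMap

noncomputable section

/-- Positivity of an `n × n` operator matrix `(a i j)`, regarded as an operator on the
`n`-fold direct sum `Hⁿ`: `∑ᵢⱼ ⟨kᵢ, a i j kⱼ⟩ ≥ 0` for all `k₁, …, kₙ ∈ H`. -/
def PosOpMatrix {H : Type*} [NormedAddCommGroup H] [InnerProductSpace ℂ H] {n : ℕ}
    (a : Fin n → Fin n → (H →L[ℂ] H)) : Prop :=
  ∀ k : Fin n → H, 0 ≤ ∑ i, ∑ j, (inner ℂ (k i) (a i j (k j)) : ℂ)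

/-- Complete positivity of a map relative to a von Neumann algebra `M`: positive operator
matrices with entries in `M` are sent to positive operator matrices. -/
def IsCPOn {H : Type*} [NormedAddCommGroup H] [InnerProductSpace ℂ H] [CompleteSpace H]
    (M : VonNeumannAlgebra H) (P : (H →L[ℂ] H) → (H →L[ℂ] H)) : Prop :=
  ∀ (n : ℕ) (a : Fin n → Fin n → (H →L[ℂ] H)),
    (∀ i j, a i j ∈ M) → PosOpMatrix a → PosOpMatrix fun i j => P (a i j)

/-- Weak-operator continuity of a map on bounded subsets of `s`; for bounded linear maps on
von Neumann algebras this captures normality (σ-weak continuity). -/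
def WOTContinuousOnBalls {H K : Type*} [NormedAddCommGroup H] [InnerProductSpace ℂ H]
    [NormedAddCommGroup K] [InnerProductSpace ℂ K]
    (s : Set (H →L[ℂ] H)) (f : (H →L[ℂ] H) → (K →L[ℂ] K)) : Prop :=
  ∀ r : ℝ, ContinuousOn
    (fun T : H →WOT[ℂ] H =>
      (ContinuousLinearMapWOT.linearEquiv (σ := RingHom.id ℂ) (E := K) (F := K) ℂ).symm (f ((((ContinuousLinearMapWOT.linearEquiv (σ := RingHom.id ℂ) (E := H) (F := H) ℂ).symm).symm) T)))
    ((ContinuousLinearMapWOT.linearEquiv (σ := RingHom.id ℂ) (E := H) (F := H) ℂ).symm '' (s ∩ Metric.closedBall 0 r))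

/-- The closure of a set of operators in the weak operator topology. -/
def WOTClosure {H K : Type*} [NormedAddCommGroup H] [InnerProductSpace ℂ H]
    [NormedAddCommGroup K] [InnerProductSpace ℂ K] (s : Set (H →L[ℂ] K)) : Set (H →L[ℂ] K) :=
  (ContinuousLinearMapWOT.linearEquiv (σ := RingHom.id ℂ) (E := H) (F := K) ℂ).symm ⁻¹' closure ((ContinuousLinearMapWOT.linearEquiv (σ := RingHom.id ℂ) (E := H) (F := K) ℂ).symm '' s)

/-- A unital normal `*`-representation of (the elements of) a von Neumann algebra `M` on a
Hilbert space `K`, encoded as a function on all of `B(H)` whose properties are imposed only on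
members of `M`. -/
structure IsNormalRepOn {H K : Type*} [NormedAddCommGroup H] [InnerProductSpace ℂ H]
    [CompleteSpace H] [NormedAddCommGroup K] [InnerProductSpace ℂ K] [CompleteSpace K]
    (M : VonNeumannAlgebra H) (π : (H →L[ℂ] H) → (K →L[ℂ] K)) : Prop where
  map_add : ∀ S ∈ M, ∀ T ∈ M, π (S + T) = π S + π T
  map_smul : ∀ (c : ℂ), ∀ T ∈ M, π (c • T) = c • π T
  map_mul : ∀ S ∈ M, ∀ T ∈ M, π (S * T) = π S * π T
  map_star : ∀ T ∈ M, π (star T) = star (π T)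
  map_one : π 1 = 1
  normal : WOTContinuousOnBalls (M : Set (H →L[ℂ] H)) π

/-- A completely positive linear map of a von Neumann algebra `M` into itself. -/
structure IsCPMapOn {H : Type*} [NormedAddCommGroup H] [InnerProductSpace ℂ H] [CompleteSpace H]
    (M : VonNeumannAlgebra H) (P : (H →L[ℂ] H) → (H →L[ℂ] H)) : Prop where
  map_mem : ∀ T ∈ M, P T ∈ M
  map_add : ∀ S ∈ M, ∀ T ∈ M, P (S + T) = P S + P T
  map_smul : ∀ (c : ℂ), ∀ T ∈ M, P (c • T) = c • P T
  cp : IsCPOn M P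

/-- A normal, unital, completely positive map on a von Neumann algebra `M`. -/
structure IsUNCPMapOn {H : Type*} [NormedAddCommGroup H] [InnerProductSpace ℂ H] [CompleteSpace H]
    (M : VonNeumannAlgebra H) (P : (H →L[ℂ] H) → (H →L[ℂ] H))
    extends IsCPMapOn M P : Prop where
  map_one : P 1 = 1
  normal : WOTContinuousOnBalls (M : Set (H →L[ℂ] H)) P

/-- A Stinespring triple `(π, K, W)` for `P`: `π` is a unital normal `*`-representation of `M`
on `K`, `W : H → K` is an isometry, and `P T = W* (π T) W` for `T ∈ M`. -/
structure IsStinespring {H K : Type*} [NormedAddCommGroup H] [InnerProductSpace ℂ H]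
    [CompleteSpace H] [NormedAddCommGroup K] [InnerProductSpace ℂ K] [CompleteSpace K]
    (M : VonNeumannAlgebra H) (P : (H →L[ℂ] H) → (H →L[ℂ] H))
    (π : (H →L[ℂ] H) → (K →L[ℂ] K)) (W : H →L[ℂ] K) : Prop where
  rep : IsNormalRepOn M π
  isometry : ∀ h : H, ‖W h‖ = ‖h‖
  dilation : ∀ T ∈ M, P T = ContinuousLinearMap.adjoint W ∘L (π T ∘L W)

/-- A minimal Stinespring triple: additionally `{π(T) W h}` has dense span in `K`. -/
structure IsMinimalStinespring {H K : Type*} [NormedAddCommGroup H] [InnerProductSpace ℂ H]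
    [CompleteSpace H] [NormedAddCommGroup K] [InnerProductSpace ℂ K] [CompleteSpace K]
    (M : VonNeumannAlgebra H) (P : (H →L[ℂ] H) → (H →L[ℂ] H))
    (π : (H →L[ℂ] H) → (K →L[ℂ] K)) (W : H →L[ℂ] K)
    extends IsStinespring M P π W : Prop where
  minimal :
    (Submodule.span ℂ {k : K | ∃ T ∈ M, ∃ h : H, k = π T (W h)}).topologicalClosure = ⊤

/-- The `P`-boundedness condition with constant `C` for an operator `Y ∈ B(H)`:
`‖∑ᵢ Sᵢ Y* hᵢ‖² ≤ C ∑ᵢⱼ ⟨hᵢ, P(Sᵢ* Sⱼ) hⱼ⟩` for all `Sᵢ ∈ M` and `hᵢ ∈ H`. -/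
def PBound {H : Type*} [NormedAddCommGroup H] [InnerProductSpace ℂ H] [CompleteSpace H]
    (M : VonNeumannAlgebra H) (P : (H →L[ℂ] H) → (H →L[ℂ] H))
    (Y : H →L[ℂ] H) (C : ℝ) : Prop :=
  ∀ (n : ℕ) (S : Fin n → (H →L[ℂ] H)), (∀ i, S i ∈ M) → ∀ h : Fin n → H,
    ((‖∑ i, S i (ContinuousLinearMap.adjoint Y (h i))‖ ^ 2 : ℝ) : ℂ) ≤
      (C : ℂ) * ∑ i, ∑ j, (inner ℂ (h i) (P (star (S i) * S j) (h j)) : ℂ)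

/-- The Arveson correspondence of `P`: all `Y ∈ B(H)` satisfying the `P`-boundedness
condition with some nonnegative constant. -/
def ArvesonCorrespondence {H : Type*} [NormedAddCommGroup H] [InnerProductSpace ℂ H]
    [CompleteSpace H] (M : VonNeumannAlgebra H) (P : (H →L[ℂ] H) → (H →L[ℂ] H)) :
    Set (H →L[ℂ] H) :=
  {Y | ∃ C : ℝ, 0 ≤ C ∧ PBound M P Y C}

/-- A cp-semigroup on `M`: a semigroup `{P_t}_{t ≥ 0}` of unital, normal, completely positive
maps on `M` with `P_0 = id`. -/
structure IsCpSemigroup {H : Type*} [NormedAddCommGroup H] [InnerProductSpace ℂ H]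
    [CompleteSpace H] (M : VonNeumannAlgebra H)
    (P : ℝ → (H →L[ℂ] H) → (H →L[ℂ] H)) : Prop where
  uncp : ∀ t : ℝ, 0 ≤ t → IsUNCPMapOn M (P t)
  id_zero : ∀ T ∈ M, P 0 T = T
  comp : ∀ s t : ℝ, 0 ≤ s → 0 ≤ t → ∀ T ∈ M, P (t + s) T = P t (P s T)

/-- Weak continuity of a cp-semigroup: `t ↦ ⟨P_t(a) h, k⟩` is continuous on `[0, ∞)`. -/
def IsWeaklyContinuousSemigroup {H : Type*} [NormedAddCommGroup H] [InnerProductSpace ℂ H]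
    [CompleteSpace H] (M : VonNeumannAlgebra H)
    (P : ℝ → (H →L[ℂ] H) → (H →L[ℂ] H)) : Prop :=
  ∀ T ∈ M, ∀ h k : H,
    ContinuousOn (fun t : ℝ => (inner ℂ ((P t T) h) k : ℂ)) (Set.Ici (0 : ℝ))

/-- A semigroup `{α_t}_{t ≥ 0}` of unital, normal `*`-endomorphisms of a von Neumann
algebra `R`, with `α_0 = id`. -/
structure IsEndoSemigroup {K : Type*} [NormedAddCommGroup K] [InnerProductSpace ℂ K]
    [CompleteSpace K] (R : VonNeumannAlgebra K)
    (α : ℝ → (K →L[ℂ] K) → (K →L[ℂ] K)) : Prop where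
  rep : ∀ t : ℝ, 0 ≤ t → IsNormalRepOn R (α t)
  map_mem : ∀ t : ℝ, 0 ≤ t → ∀ S ∈ R, α t S ∈ R
  id_zero : ∀ S ∈ R, α 0 S = S
  comp : ∀ s t : ℝ, 0 ≤ s → 0 ≤ t → ∀ S ∈ R, α (t + s) S = α t (α s S)

open scoped InnerProductSpace

namespace OperatorMatrix

variable {H : Type*} [NormedAddCommGroup H] [InnerProductSpace ℂ H]
variable {ι : Type*} [Fintype ι]

def toCLM (a : ι → ι → (H →L[ℂ] H)) : PiLp 2 (fun _ : ι => H) →L[ℂ] PiLp 2 (fun _ : ι => H) :=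
  (PiLp.continuousLinearEquiv 2 ℂ (fun _ : ι => H)).symm.toContinuousLinearMap ∘L
    ContinuousLinearMap.pi fun i => ∑ j, a i j ∘L PiLp.proj 2 (fun _ : ι => H) j

@[simp]
lemma toCLM_apply (a : ι → ι → (H →L[ℂ] H)) (x : PiLp 2 (fun _ : ι => H)) (i : ι) :
    toCLM a x i = ∑ j, a i j (x j) := by
  simp [toCLM]

lemma inner_toCLM (a : ι → ι → (H →L[ℂ] H)) (x y : PiLp 2 (fun _ : ι => H)) :
    ⟪x, toCLM a y⟫_ℂ = ∑ i, ∑ j, ⟪x i, a i j (y j)⟫_ℂ := by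
  simp [PiLp.inner_apply, inner_sum]

lemma toCLM_nonneg {n : ℕ} {a : Fin n → Fin n → (H →L[ℂ] H)} (ha : PosOpMatrix a) :
    0 ≤ toCLM a := by
  rw [ContinuousLinearMap.nonneg_iff_isPositive, ContinuousLinearMap.isPositive_iff_complex]
  intro x
  have hx : 0 ≤ ⟪toCLM a x, x⟫_ℂ := by
    rw [← inner_conj_symm, inner_toCLM]
    exact star_nonneg_iff.mpr (ha x)
  obtain ⟨hre, him⟩ := Complex.nonneg_iff.mp hx
  exact ⟨Complex.ext (by simp) (by simpa using him), by simpa using hre⟩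

section Diag

variable [DecidableEq ι]

def diag (T : H →L[ℂ] H) : PiLp 2 (fun _ : ι => H) →L[ℂ] PiLp 2 (fun _ : ι => H) :=
  toCLM fun i j => if i = j then T else 0

@[simp]
lemma diag_apply (T : H →L[ℂ] H) (x : PiLp 2 (fun _ : ι => H)) (i : ι) :
    diag T x i = T (x i) := by
  rw [diag, toCLM_apply, Finset.sum_eq_single i (fun j _ hj => by simp [Ne.symm hj]) (by simp)]
  simp

lemma diag_single (T : H →L[ℂ] H) (j : ι) (v : H) :
    diag T (PiLp.single 2 j v) = PiLp.single 2 j (T v) := by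
  ext k
  by_cases hk : k = j
  · subst hk; simp
  · simp [hk]

lemma commute_diag_toCLM {T : H →L[ℂ] H} {a : ι → ι → (H →L[ℂ] H)}
    (h : ∀ i j, Commute T (a i j)) : Commute (diag T) (toCLM a) := by
  ext x i
  simp only [mul_apply_eq_comp, diag_apply, toCLM_apply, map_sum]
  exact Finset.sum_congr rfl fun j _ => by rw [← mul_apply_eq_comp, (h i j).eq, mul_apply_eq_comp]

end Diag

variable [CompleteSpace H]

def entry (B : PiLp 2 (fun _ : ι => H) →L[ℂ] PiLp 2 (fun _ : ι => H)) (i j : ι) : H →L[ℂ] H :=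
  PiLp.proj 2 (fun _ : ι => H) i ∘L B ∘L adjoint (PiLp.proj 2 (fun _ : ι => H) j)

lemma entry_star_mul (B C : PiLp 2 (fun _ : ι => H) →L[ℂ] PiLp 2 (fun _ : ι => H)) (i j : ι) :
    entry (star B * C) i j = ∑ k, star (entry B k i) * entry C k j := by
  ext v
  refine ext_inner_left ℂ fun u => ?_
  simp only [entry, sum_apply, inner_sum, mul_apply_eq_comp, star_eq_adjoint, comp_apply,
    adjoint_inner_right]
  rw [← adjoint_inner_left, adjoint_inner_right, PiLp.inner_apply]
  rfl

variable [DecidableEq ι]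

lemma adjoint_proj_apply (i : ι) (v : H) :
    adjoint (PiLp.proj (𝕜 := ℂ) 2 (fun _ : ι => H) i) v =
      (PiLp.single 2 i v : PiLp 2 fun _ : ι => H) := by
  refine ext_inner_left ℂ fun x => ?_
  rw [adjoint_inner_right]
  simp [PiLp.inner_apply, apply_ite]

lemma entry_apply (B : PiLp 2 (fun _ : ι => H) →L[ℂ] PiLp 2 (fun _ : ι => H)) (i j : ι) (v : H) :
    entry B i j v = B (PiLp.single 2 j v) i := by
  simp [entry, adjoint_proj_apply]

@[simp]
lemma entry_toCLM (a : ι → ι → (H →L[ℂ] H)) (i j : ι) : entry (toCLM a) i j = a i j := by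
  ext v
  simp [entry_apply, apply_ite]

lemma commute_entry_of_commute_diag {T : H →L[ℂ] H}
    {B : PiLp 2 (fun _ : ι => H) →L[ℂ] PiLp 2 (fun _ : ι => H)} (h : Commute (diag T) B) (i j : ι) : Commute T (entry B i j) := by
  ext v
  rw [mul_apply_eq_comp, mul_apply_eq_comp, entry_apply, entry_apply, ← diag_apply,
    ← mul_apply_eq_comp, h.eq, mul_apply_eq_comp, diag_single]

end OperatorMatrix

open OperatorMatrix

section

variable {H : Type*} [NormedAddCommGroup H] [InnerProductSpace ℂ H]

lemma sum_sum_inner_eq_norm_sq {ι : Type*} [Fintype ι] (c : ι → H) :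
    ∑ i, ∑ j, ⟪c i, c j⟫_ℂ = ((‖∑ i, c i‖ ^ 2 : ℝ) : ℂ) := by
  calc ∑ i, ∑ j, ⟪c i, c j⟫_ℂ = ⟪∑ i, c i, ∑ j, c j⟫_ℂ := by simp_rw [sum_inner, inner_sum]
    _ = _ := by rw [inner_self_eq_norm_sq_to_K]; norm_cast

variable [CompleteSpace H]

lemma posOpMatrix_star_mul {n : ℕ} (S : Fin n → (H →L[ℂ] H)) :
    PosOpMatrix fun i j => star (S i) * S j := by
  intro k
  simp only [mul_apply_eq_comp, star_eq_adjoint, adjoint_inner_right]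
  rw [sum_sum_inner_eq_norm_sq fun i => S i (k i)]
  positivity

lemma exists_star_mul_self_eq_and_commute_of_nonneg {A : Type*} [CStarAlgebra A]
    [PartialOrder A] [StarOrderedRing A] {a : A} (ha : 0 ≤ a) :
    ∃ b : A, star b * b = a ∧ ∀ d : A, Commute d a → Commute d b :=
  ⟨CFC.sqrt a, by rw [(CFC.sqrt_nonneg a).isSelfAdjoint.star_eq, CFC.sqrt_mul_sqrt_self a ha],
    fun d hd => (hd.symm.cfcₙ_nnreal _).symm⟩

lemma PosOpMatrix.exists_eq_sum_star_mul (M : VonNeumannAlgebra H) {n : ℕ}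
    {a : Fin n → Fin n → (H →L[ℂ] H)} (haM : ∀ i j, a i j ∈ M) (ha : PosOpMatrix a) :
    ∃ b : Fin n → Fin n → (H →L[ℂ] H), (∀ i j, b i j ∈ M) ∧
      ∀ i j, a i j = ∑ k, star (b k i) * b k j := by
  obtain ⟨B, hBB, hB⟩ := exists_star_mul_self_eq_and_commute_of_nonneg (toCLM_nonneg ha)
  refine ⟨entry B, fun i j => ?_, fun i j => by rw [← entry_star_mul, hBB, entry_toCLM]⟩
  rw [← M.commutant_commutant, VonNeumannAlgebra.mem_commutant_iff]
  intro T hT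
  have hTa : ∀ i j, Commute T (a i j) := fun i j =>
    (VonNeumannAlgebra.mem_commutant_iff.mp hT (a i j) (haM i j)).symm
  exact (commute_entry_of_commute_diag (hB _ (commute_diag_toCLM hTa)) i j).eq

lemma IsCPMapOn.map_sum {M : VonNeumannAlgebra H} {P : (H →L[ℂ] H) → (H →L[ℂ] H)}
    (hP : IsCPMapOn M P) {ι : Type*} [Fintype ι] (x : ι → (H →L[ℂ] H)) (hx : ∀ k, x k ∈ M) :
    P (∑ k, x k) = ∑ k, P (x k) := by
  let f : M →+ (H →L[ℂ] H) := AddMonoidHom.mk' (fun S => P S) fun S T => hP.map_add S S.2 T T.2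
  simpa only [f, AddMonoidHom.mk'_apply, AddSubmonoidClass.coe_finsetSum] using
    _root_.map_sum f (fun k => (⟨x k, hx k⟩ : M)) Finset.univ

end

namespace PBound

variable {H : Type*} [NormedAddCommGroup H] [InnerProductSpace ℂ H] [CompleteSpace H]
variable {M : VonNeumannAlgebra H} {P Q : (H →L[ℂ] H) → (H →L[ℂ] H)} {Y Z : H →L[ℂ] H} {C : ℝ}

lemma of_subsingleton [Subsingleton H] : PBound M P Y C := by
  intro n S _ h
  simp [Subsingleton.elim (h _) 0]

lemma nonneg [Nontrivial H] (hP1 : P 1 = 1) (hY : PBound M P Y C) : 0 ≤ C := by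
  obtain ⟨v, hv⟩ := exists_ne (0 : H)
  have hbound := hY 1 (fun _ => 1) (fun _ => one_mem M) (fun _ => v)
  simp only [Fin.sum_univ_one, star_one, one_mul, hP1, one_apply_eq_self,
    inner_self_eq_norm_sq_to_K] at hbound
  have hCv : (0 : ℂ) ≤ ((C * ‖v‖ ^ 2 : ℝ) : ℂ) := by
    push_cast
    exact (Complex.zero_le_real.mpr (sq_nonneg _)).trans hbound
  exact nonneg_of_mul_nonneg_left (Complex.zero_le_real.mp hCv) (pow_pos (norm_pos_iff.mpr hv) 2)

lemma sum_inner_le (hP : IsCPMapOn M P) (hY : PBound M P Y C) {n : ℕ}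
    {a : Fin n → Fin n → (H →L[ℂ] H)} (haM : ∀ i j, a i j ∈ M) (ha : PosOpMatrix a)
    (h : Fin n → H) :
    ∑ i, ∑ j, ⟪adjoint Y (h i), a i j (adjoint Y (h j))⟫_ℂ ≤
      C * ∑ i, ∑ j, ⟪h i, P (a i j) (h j)⟫_ℂ := by
  obtain ⟨b, hbM, hab⟩ := ha.exists_eq_sum_star_mul M haM
  have hsum_comm : ∀ f : Fin n → Fin n → Fin n → ℂ,
      ∑ i, ∑ j, ∑ k, f i j k = ∑ k, ∑ i, ∑ j, f i j k := fun f =>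
    (Finset.sum_congr rfl fun i _ => Finset.sum_comm).trans Finset.sum_comm
  calc ∑ i, ∑ j, ⟪adjoint Y (h i), a i j (adjoint Y (h j))⟫_ℂ
      = ∑ k, ((‖∑ i, b k i (adjoint Y (h i))‖ ^ 2 : ℝ) : ℂ) := by
        simp_rw [← sum_sum_inner_eq_norm_sq, hab, sum_apply, inner_sum, mul_apply_eq_comp,
          star_eq_adjoint, adjoint_inner_right]
        exact hsum_comm _
    _ ≤ ∑ k, C * ∑ i, ∑ j, ⟪h i, P (star (b k i) * b k j) (h j)⟫_ℂ :=
        Finset.sum_le_sum fun k _ => hY n (b k) (hbM k) h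
    _ = C * ∑ i, ∑ j, ⟪h i, P (a i j) (h j)⟫_ℂ := by
        simp_rw [hab, hP.map_sum _ fun k => mul_mem (star_mem (hbM k _)) (hbM k _), sum_apply,
          inner_sum, ← Finset.mul_sum]
        exact congrArg _ (hsum_comm _).symm

lemma mul (hP : IsCPMapOn M P) (hQ : IsCPMapOn M Q) {CY CZ : ℝ} (hY : PBound M P Y CY)
    (hZ : PBound M Q Z CZ) (hCZ : 0 ≤ CZ) : PBound M (fun T => P (Q T)) (Y * Z) (CY * CZ) := by
  intro n S hS h
  have hSS : ∀ i j, star (S i) * S j ∈ M := fun i j => mul_mem (star_mem (hS i)) (hS j)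
  have hQpos : PosOpMatrix fun i j => Q (star (S i) * S j) :=
    hQ.cp n _ hSS (posOpMatrix_star_mul S)
  have hadj : ∀ i, adjoint (Y * Z) (h i) = adjoint Z (adjoint Y (h i)) := fun i => by
    rw [← star_eq_adjoint, star_mul, mul_apply_eq_comp, star_eq_adjoint, star_eq_adjoint]
  calc ((‖∑ i, S i (adjoint (Y * Z) (h i))‖ ^ 2 : ℝ) : ℂ)
      ≤ CZ * ∑ i, ∑ j, ⟪adjoint Y (h i), Q (star (S i) * S j) (adjoint Y (h j))⟫_ℂ := by
        simpa only [hadj] using hZ n S hS fun i => adjoint Y (h i)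
    _ ≤ CZ * (CY * ∑ i, ∑ j, ⟪h i, P (Q (star (S i) * S j)) (h j)⟫_ℂ) :=
        mul_le_mul_of_nonneg_left
          (hY.sum_inner_le hP (fun i j => hQ.map_mem _ (hSS i j)) hQpos h)
          (Complex.zero_le_real.mpr hCZ)
    _ = ((CY * CZ : ℝ) : ℂ) * ∑ i, ∑ j, ⟪h i, P (Q (star (S i) * S j)) (h j)⟫_ℂ := by
        push_cast
        ring

end PBound

/-- if `Y` is `P`-bounded with constant `C_Y` and `Z` is `Q`-bounded with
constant `C_Z`, then `YZ` is `(P ∘ Q)`-bounded with constant `C_Y · C_Z`; in particular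
`E_P · E_Q ⊆ E_{P∘Q}`. -/
theorem pbound_mul {H : Type*} [NormedAddCommGroup H] [InnerProductSpace ℂ H]
    [CompleteSpace H] (M : VonNeumannAlgebra H)
    (P Q : (H →L[ℂ] H) → (H →L[ℂ] H))
    (hP : IsUNCPMapOn M P) (hQ : IsUNCPMapOn M Q) :
    (∀ (Y Z : H →L[ℂ] H) (CY CZ : ℝ), PBound M P Y CY → PBound M Q Z CZ →
      PBound M (fun T => P (Q T)) (Y * Z) (CY * CZ)) ∧
    (∀ Y ∈ ArvesonCorrespondence M P, ∀ Z ∈ ArvesonCorrespondence M Q,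
      Y * Z ∈ ArvesonCorrespondence M (fun T => P (Q T))) := by
  have hmul : ∀ (Y Z : H →L[ℂ] H) (CY CZ : ℝ), PBound M P Y CY → PBound M Q Z CZ →
      PBound M (fun T => P (Q T)) (Y * Z) (CY * CZ) := by
    intro Y Z CY CZ hY hZ
    cases subsingleton_or_nontrivial H
    · exact PBound.of_subsingleton
    · exact hY.mul hP.toIsCPMapOn hQ.toIsCPMapOn hZ (hZ.nonneg hQ.map_one)
  refine ⟨hmul, ?_⟩
  rintro Y ⟨CY, hCY, hY⟩ Z ⟨CZ, hCZ, hZ⟩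
  exact ⟨CY * CZ, mul_nonneg hCY hCZ, hmul Y Z CY CZ hY hZ⟩
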